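/- arXiv:1902.06030 — 8 statements merged into one kernel-verified Lean document; each statement's English description precedes it below -/
import Mathlib

section
/- For any infinite cardinal κ, the order dimension of the poset of finite subsets of κ ordered by inclusion is exactly log₂(log₂(κ)), where log₂(μ) = min{λ : 2^λ ≥ μ}. -/
open Cardinal

universe u

/-- `L` is a realizer of the partial order on `P`: a family of linear orders
whose intersection is exactly `≤`. -/
def IsRealizer (P : Type u) [PartialOrder P] {ι : Type u} (L : ι → P → P → Prop) : Prop :=
  (∀ i, IsLinearOrder P (L i)) ∧ ∀ x y : P, x ≤ y ↔ ∀ i, L i x y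

/-- The order dimension of a partial order: the least cardinality of a realizer. -/
noncomputable def orderDim (P : Type u) [PartialOrder P] : Cardinal.{u} :=
  sInf { c | ∃ (ι : Type u) (L : ι → P → P → Prop), #ι = c ∧ IsRealizer P L }

/-- `clog2 μ = min {λ : μ ≤ 2^λ}`. -/
noncomputable def clog2 (μ : Cardinal.{u}) : Cardinal.{u} := sInf { l | μ ≤ 2 ^ l }

/-!
If linear orders `≤ᵢ`, `i ∈ ι`, realize the finite subsets of `X`, then the coding
`b ↦ {{i | {a} ≤ᵢ {b}} | a ≠ b}` is injective, so `#X ≤ 2 ^ 2 ^ #ι`. Conversely, if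
`#X ≤ 2 ^ 2 ^ λ`, code `X` into `K → Bool` with `K` well-ordered of size `2 ^ λ`. Flipping the
lexicographic order along masks taken from a family of size `λ` that realizes every finite pattern
on `K` puts any point above any finite set avoiding it, and the colex orders of these linear orders
realize the finite subsets of `X`.
-/

lemma le_two_pow_clog2 (μ : Cardinal.{u}) : μ ≤ 2 ^ clog2 μ :=
  csInf_mem (s := {l | μ ≤ 2 ^ l}) ⟨μ, (cantor μ).le⟩

lemma clog2_le_iff {μ l : Cardinal.{u}} : clog2 μ ≤ l ↔ μ ≤ 2 ^ l :=
  ⟨fun h => (le_two_pow_clog2 μ).trans (power_le_power_left two_ne_zero h), fun h => csInf_le' h⟩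

lemma aleph0_le_clog2 {μ : Cardinal.{u}} (h : ℵ₀ ≤ μ) : ℵ₀ ≤ clog2 μ := by
  by_contra! hlt
  exact (h.trans (le_two_pow_clog2 μ)).not_gt (power_lt_aleph0 (natCast_lt_aleph0 (n := 2)) hlt)

section OrderDim

variable {P ι : Type u} [PartialOrder P] {L : ι → P → P → Prop}

lemma IsRealizer.orderDim_le (hL : IsRealizer P L) : orderDim P ≤ #ι :=
  csInf_le' ⟨ι, L, rfl, hL⟩

lemma le_orderDim {c : Cardinal.{u}} (hP : ∃ (ι : Type u) (L : ι → P → P → Prop), IsRealizer P L)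
    (h : ∀ (ι : Type u) (L : ι → P → P → Prop), IsRealizer P L → c ≤ #ι) : c ≤ orderDim P := by
  obtain ⟨ι, L, hL⟩ := hP
  exact le_csInf ⟨#ι, ι, L, rfl, hL⟩ fun _ ⟨ι', L', hι', hL'⟩ => hι' ▸ h ι' L' hL'

end OrderDim

section LowerBound

variable {X ι : Type u} {L : ι → Finset X → Finset X → Prop}

lemma IsRealizer.exists_rel_singleton_not_rel_singleton (hL : IsRealizer (Finset X) L)
    {a b c : X} (hca : c ≠ a) (hcb : c ≠ b) : ∃ i, L i {a} {c} ∧ ¬L i {c} {b} := by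
  classical
  have hnot : ¬({c} : Finset X) ⊆ {a, b} := by simp [hca, hcb]
  obtain ⟨i, hi⟩ : ∃ i, ¬L i {c} {a, b} := by simpa using mt (hL.2 _ _).2 hnot
  have := hL.1 i
  have hab_c : L i {a, b} {c} := (total_of (L i) _ _).resolve_left hi
  have rel_pair : ∀ x ∈ ({a, b} : Finset X), L i {x} {a, b} := fun x hx =>
    (hL.2 _ _).1 (Finset.singleton_subset_iff.2 hx) i
  exact ⟨i, trans_of (L i) (rel_pair a (by simp)) hab_c,
    fun hcb' => hi (trans_of (L i) hcb' (rel_pair b (by simp)))⟩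

lemma IsRealizer.card_le (hL : IsRealizer (Finset X) L) : #X ≤ 2 ^ (2 : Cardinal) ^ #ι := by
  rw [← mk_set, ← mk_set]
  let code : X → Set (Set ι) := fun b => {s | ∃ a ≠ b, s = {i | L i {a} {b}}}
  refine mk_le_of_injective (f := code) fun b₁ b₂ hb => by_contra fun hne => ?_
  have hmem : {i | L i {b₁} {b₂}} ∈ code b₁ := hb ▸ ⟨b₁, hne, rfl⟩
  obtain ⟨a, hab₁, hs⟩ := hmem
  obtain ⟨i, hi, hni⟩ := hL.exists_rel_singleton_not_rel_singleton hab₁.symm hne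
  exact hni (hs ▸ hi : i ∈ {i | L i {b₁} {b₂}})

end LowerBound

section Colex

variable {Y ι : Type u}

lemma isRealizer_colex (ord : ι → LinearOrder Y)
    (htop : ∀ (b : Y) (F : Finset Y), b ∉ F → ∃ i, ∀ a ∈ F, (ord i).lt a b) :
    IsRealizer (Finset Y) fun i s t => letI := ord i; toColex s ≤ toColex t := by
  refine ⟨fun i => ?_, fun s t => ⟨fun hst i => ?_, fun h => ?_⟩⟩
  · let := ord i
    exact { refl := fun s => le_refl (toColex s)
            trans := fun _ _ _ => le_trans
            antisymm := fun _ _ h₁ h₂ => toColex_inj.1 (le_antisymm h₁ h₂)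
            total := fun s t => le_total (toColex s) (toColex t) }
  · let := ord i
    exact Finset.Colex.toColex_le_toColex_of_subset hst
  · by_contra hst
    obtain ⟨b, hbs, hbt⟩ := Finset.not_subset.1 hst
    obtain ⟨i, hi⟩ := htop b t hbt
    let := ord i
    exact (h i).not_gt (Finset.Colex.toColex_lt_toColex_iff_exists_forall_lt.2
      ⟨b, hbs, hbt, fun a hat _ => hi a hat⟩)

end Colex

section TwistedLex

variable {Y K ι : Type*} [LinearOrder K] [WellFoundedLT K]

noncomputable abbrev twistedLex (g : Y ↪ (K → Bool)) (m : K → Bool) : LinearOrder Y :=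
  LinearOrder.lift' (fun y => toLex fun k => g y k ^^ m k) fun _ _ h =>
    g.injective <| funext fun k => Bool.xor_left_inj.1 (congrFun (congrArg ofLex h) k)

lemma exists_forall_lt_eq_and_ne {β : Type*} {x y : K → β} (h : x ≠ y) :
    ∃ δ, (∀ j < δ, x j = y j) ∧ x δ ≠ y δ := by
  obtain ⟨δ, hδ, hmin⟩ := wellFounded_lt.has_min {k | x k ≠ y k} (Function.ne_iff.1 h)
  exact ⟨δ, fun j hj => not_not.1 fun hne => hmin j hne hj, hδ⟩

/-- Choose the mask to flip `b`'s code at the first place where it differs from each `a ∈ F`. -/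
lemma exists_forall_twistedLex_lt (g : Y ↪ (K → Bool)) (m : ι → K → Bool)
    (hm : ∀ (D : Finset K) (v : K → Bool), ∃ i, ∀ k ∈ D, m i k = v k)
    {b : Y} {F : Finset Y} (hb : b ∉ F) : ∃ i, ∀ a ∈ F, (twistedLex g (m i)).lt a b := by
  have hdiff : ∀ a ∈ F, ∃ δ, (∀ j < δ, g a j = g b j) ∧ g a δ ≠ g b δ := fun a ha =>
    exists_forall_lt_eq_and_ne (g.injective.ne (ne_of_mem_of_not_mem ha hb))
  choose δ hδ using hdiff
  obtain ⟨i, hi⟩ := hm (F.attach.image fun a => δ a.1 a.2) fun k => !g b k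
  refine ⟨i, fun a ha => ⟨δ a ha, fun j hj => ?_, ?_⟩⟩
  · show (g a j ^^ m i j) = (g b j ^^ m i j)
    rw [(hδ a ha).1 j hj]
  · have hflip := hi (δ a ha) (Finset.mem_image_of_mem _ (Finset.mem_attach _ ⟨a, ha⟩))
    have hne := (hδ a ha).2
    show (g a (δ a ha) ^^ m i (δ a ha)) < (g b (δ a ha) ^^ m i (δ a ha))
    rw [hflip]
    revert hne
    cases g a (δ a ha) <;> cases g b (δ a ha) <;> decide

end TwistedLex

section TraceMask

variable {Λ K : Type*}

open scoped Classical in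
noncomputable def traceMask (i : Finset Λ × Finset (Finset Λ)) (t : Set Λ) : Bool :=
  decide ({x ∈ i.1 | x ∈ t} ∈ i.2)

open scoped Classical in
lemma exists_finset_injOn_trace {f : K → Set Λ} {D : Finset K} (hf : Set.InjOn f D) :
    ∃ d : Finset Λ, Set.InjOn (fun k => {x ∈ d | x ∈ f k}) D := by
  have hsep : ∀ p : K × K, ∃ s : Finset Λ, f p.1 ≠ f p.2 → ∃ x ∈ s, ¬(x ∈ f p.1 ↔ x ∈ f p.2) := by
    intro p
    by_cases hp : f p.1 = f p.2
    · exact ⟨∅, fun h => (h hp).elim⟩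
    · obtain ⟨x, hx⟩ := not_forall.1 (mt Set.ext hp)
      exact ⟨{x}, fun _ => ⟨x, Finset.mem_singleton_self x, hx⟩⟩
  choose s hs using hsep
  refine ⟨(D ×ˢ D).biUnion s, fun k hk k' hk' heq => hf hk hk' (by_contra fun hne => ?_)⟩
  obtain ⟨x, hxs, hx⟩ := hs (k, k') hne
  have hxd : x ∈ (D ×ˢ D).biUnion s :=
    Finset.mem_biUnion.2 ⟨(k, k'), Finset.mem_product.2 ⟨hk, hk'⟩, hxs⟩
  have hx' := congrArg (x ∈ ·) heq
  simp only [Finset.mem_filter, hxd, true_and] at hx'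
  exact hx (Iff.of_eq hx')

open scoped Classical in
/-- The Hewitt–Marczewski–Pondiczery bound: `Set Λ → Bool` has a dense subset of size `#Λ`. -/
lemma exists_traceMask_eq (ρ : K ↪ Set Λ) (D : Finset K) (v : K → Bool) :
    ∃ i, ∀ k ∈ D, traceMask i (ρ k) = v k := by
  obtain ⟨d, hd⟩ := exists_finset_injOn_trace (ρ.injective.injOn (s := D))
  refine ⟨(d, {k ∈ D | v k}.image fun k => {x ∈ d | x ∈ ρ k}), fun k hk => ?_⟩
  rw [traceMask, Bool.eq_iff_iff, decide_eq_true_iff]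
  constructor
  · intro hmem
    obtain ⟨k', hk', htr⟩ := Finset.mem_image.1 hmem
    rw [Finset.mem_filter] at hk'
    exact hd hk'.1 hk htr ▸ hk'.2
  · intro hv
    exact Finset.mem_image.2 ⟨k, Finset.mem_filter.2 ⟨hk, hv⟩, rfl⟩

end TraceMask

lemma exists_isRealizer_finset {Y Λ : Type u} (h : #Y ≤ 2 ^ (2 : Cardinal) ^ #Λ) :
    ∃ L : Finset Λ × Finset (Finset Λ) → Finset Y → Finset Y → Prop,
      IsRealizer (Finset Y) L := by
  let K := (#(Set Λ)).ord.ToType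
  obtain ⟨ρ⟩ : Nonempty (K ↪ Set Λ) := by rw [← le_def, mk_ord_toType]
  obtain ⟨g⟩ : Nonempty (Y ↪ (K → Bool)) := by
    simpa [K, ← le_def, mk_arrow] using h
  exact ⟨_, isRealizer_colex _ fun _ _ hb =>
    exists_forall_twistedLex_lt g (fun i k => traceMask i (ρ k)) (exists_traceMask_eq ρ) hb⟩

lemma mk_finset_prod_finset_finset (Λ : Type u) [Infinite Λ] :
    #(Finset Λ × Finset (Finset Λ)) = #Λ := by
  rw [mk_prod, lift_id, lift_id, mk_finset_of_infinite, mk_finset_of_infinite,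
    mk_finset_of_infinite]
  exact mul_eq_self (infinite_iff.1 inferInstance)

/-- The order dimension of the finite subsets of an infinite cardinal κ,
ordered by inclusion, is exactly log₂(log₂ κ). -/
theorem stmt4 (κ : Cardinal.{u}) (hκ : ℵ₀ ≤ κ) :
    orderDim (Finset κ.out) = clog2 (clog2 κ) := by
  set lam := clog2 (clog2 κ)
  have : Infinite lam.out :=
    infinite_iff.2 <| (mk_out lam).symm ▸ aleph0_le_clog2 (aleph0_le_clog2 hκ)
  obtain ⟨L, hL⟩ := exists_isRealizer_finset (Y := κ.out) (Λ := lam.out) <| by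
    rw [mk_out, mk_out, ← clog2_le_iff, ← clog2_le_iff]
  refine le_antisymm ?_ (le_orderDim ⟨_, L, hL⟩ fun _ _ hL' => ?_)
  · exact hL.orderDim_le.trans_eq (by rw [mk_finset_prod_finset_finset, mk_out])
  · rw [clog2_le_iff, clog2_le_iff, ← mk_out κ]
    exact hL'.card_le
end

section
/- If (P, ≤) is a locally countable partial order, then there exists a function r : P → η · ω₁ (the antilexicographic product of the order type η of the rationals with ω₁) such that x < y implies r(x) < r(y). -/
/-!
Fix a well-order `≺` of `P` and send each `x` to its block, the `≺`-least `z` with `x ≤ z`.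
If `x ≤ y` then the block of `x` is `≼` the block of `y`. Elements of a common block `z` lie in
the countable set `Iic z`, which embeds strictly monotonically into `ℚ`; this gives the rational
coordinate. Distinct blocks are separated by the rank of the well-founded relation
"`z₀ ≺ z` and `z₀` is the block of some element below `z`", under which `z` has at most
countably many predecessors (the blocks of `Iic z`), so every rank is a countable ordinal.
-/

open Cardinal Set

universe u

theorem exists_strictMono_rat_of_countable {α : Type*} [PartialOrder α] [Countable α] :
    ∃ f : α → ℚ, StrictMono f := by
  have : Countable (LinearExtension α) := ‹Countable α›
  obtain ⟨g⟩ := Order.embedding_from_countable_to_dense (α := LinearExtension α) (β := ℚ)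
  have hext : StrictMono (toLinearExtension : α → LinearExtension α) :=
    toLinearExtension.monotone.strictMono_of_injective fun _ _ h => h
  exact ⟨g ∘ toLinearExtension, g.strictMono.comp hext⟩

theorem Set.Countable.exists_strictMonoOn_rat {α : Type*} [PartialOrder α] {s : Set α}
    (hs : s.Countable) : ∃ f : α → ℚ, StrictMonoOn f s := by
  classical
  have := hs.to_subtype
  obtain ⟨g, hg⟩ := exists_strictMono_rat_of_countable (α := s)
  refine ⟨fun a => if h : a ∈ s then g ⟨a, h⟩ else 0, fun a ha b hb hab => ?_⟩
  simpa only [dif_pos ha, dif_pos hb] using hg (Subtype.mk_lt_mk.mpr hab)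

theorem IsWellFounded.rank_lt_ord_of_isRegular {α : Type u} {r : α → α → Prop}
    [IsWellFounded α r] {c : Cardinal.{u}} (hc : c.IsRegular) (hr : ∀ a, #{b // r b a} < c)
    (a : α) : IsWellFounded.rank r a < c.ord := by
  induction a using IsWellFounded.induction r with
  | _ a ih =>
    rw [IsWellFounded.rank_eq]
    simp only [Order.succ_eq_add_one]
    exact Ordinal.iSup_add_one_lt_of_lt_cof (by rw [hc.cof_ord]; exact hr a) fun b => ih b.1 b.2

namespace LocallyCountable

variable {P : Type u} [PartialOrder P]

local infix:50 " ≺ " => @WellOrderingRel P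

noncomputable def blockOf (x : P) : P :=
  WellOrderingRel.isWellOrder.wf.min (Ici x) nonempty_Ici

theorem le_blockOf (x : P) : x ≤ blockOf x :=
  WellOrderingRel.isWellOrder.wf.min_mem (Ici x) nonempty_Ici

theorem blockOf_eq_or_lt_of_le {x y : P} (h : x ≤ y) :
    blockOf x = blockOf y ∨ blockOf x ≺ blockOf y := by
  have hnot : ¬ blockOf y ≺ blockOf x :=
    WellOrderingRel.isWellOrder.wf.not_lt_min (Ici x) (h.trans (le_blockOf y))
  rcases trichotomous_of (· ≺ ·) (blockOf x) (blockOf y) with hlt | heq | hgt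
  exacts [Or.inr hlt, Or.inl heq, absurd hgt hnot]

def BlockRel (z₀ z : P) : Prop :=
  z₀ ≺ z ∧ z₀ ∈ blockOf '' Iic z

instance : IsWellFounded P BlockRel :=
  ⟨Subrelation.wf (fun h => h.1) WellOrderingRel.isWellOrder.wf⟩

noncomputable def blockRank (x : P) : Ordinal.{u} :=
  IsWellFounded.rank BlockRel (blockOf x)

theorem blockRank_lt_of_le {x y : P} (hxy : x ≤ y) (hlt : blockOf x ≺ blockOf y) :
    blockRank x < blockRank y :=
  IsWellFounded.rank_lt_of_rel ⟨hlt, x, hxy.trans (le_blockOf y), rfl⟩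

theorem blockRank_lt_ord_aleph_one (hloc : ∀ x : P, {y : P | y ≤ x}.Countable) (x : P) :
    blockRank x < (aleph 1).ord := by
  refine IsWellFounded.rank_lt_ord_of_isRegular isRegular_aleph_one (fun z => ?_) _
  have hsub : {z₀ | BlockRel z₀ z}.Countable :=
    ((hloc z).image blockOf).mono fun _ h => h.2
  exact (le_aleph0_iff_set_countable.mpr hsub).trans_lt aleph0_lt_aleph_one

end LocallyCountable

open LocallyCountable in
/-- Every locally countable partial order admits a rank function into
η · ω₁, i.e. into ℚ × ω₁ ordered antilexicographically, which is strictly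
increasing. -/
theorem stmt8 {P : Type u} [PartialOrder P]
    (hloc : ∀ x : P, {y : P | y ≤ x}.Countable) :
    ∃ r : P → ℚ × {o : Ordinal.{u} // o < (Cardinal.aleph 1).ord},
      ∀ x y : P, x < y →
        ((r x).2 < (r y).2 ∨ ((r x).2 = (r y).2 ∧ (r x).1 < (r y).1)) := by
  choose q hq using fun z : P => (hloc z).exists_strictMonoOn_rat
  refine ⟨fun x => (q (blockOf x) x, ⟨blockRank x, blockRank_lt_ord_aleph_one hloc x⟩),
    fun x y hxy => ?_⟩
  rcases blockOf_eq_or_lt_of_le hxy.le with heq | hlt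
  · have hrank : blockRank x = blockRank y := congrArg (IsWellFounded.rank _) heq
    refine Or.inr ⟨Subtype.ext hrank, ?_⟩
    show q (blockOf x) x < q (blockOf y) y
    rw [heq]
    exact hq (blockOf y) (heq ▸ le_blockOf x) (le_blockOf y) hxy
  · exact Or.inl (Subtype.mk_lt_mk.mpr (blockRank_lt_of_le hxy.le hlt))
end

section
/- Let κ be a regular uncountable cardinal and (P, ≤) a locally countable partial order of size κ⁺. Then there is a family (f_α : α < κ) of functions f_α : P → 2 such that for every countable A ⊆ P and every y ∈ P \ A, there is α < κ with f_α(x) = 0 for all x ∈ A and f_α(y) = 1. -/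
/-!
Code each point of `P` by a function `κ → κ`, so that codes of distinct points are almost disjoint
(they agree on fewer than `κ` arguments). Such a family of size `κ⁺` exists: a maximal one cannot
have size `≤ κ`, because any `κ` functions are almost disjoint from a single function that
eventually dominates each of them. Given a countable `A` and `y ∉ A`, regularity of `κ` yields an
argument `ξ` at which the code of `y` differs from all codes of points of `A`; the test
"the code of `x` takes the value `v` at `ξ`", indexed by `(ξ, v) ∈ κ × κ`, separates `y` from `A`.
-/

universe u

open Cardinal Order Set

def Function.AlmostDisjoint {α : Type u} {β : Type*} (f g : α → β) : Prop :=
  #{x | f x = g x} < #α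

namespace Function.AlmostDisjoint

variable {α : Type u} {β : Type*}

theorem symm {f g : α → β} (h : AlmostDisjoint f g) : AlmostDisjoint g f := by
  simpa only [AlmostDisjoint, eq_comm] using h

theorem not_self (f : α → β) : ¬ AlmostDisjoint f f := by
  simp [AlmostDisjoint]

end Function.AlmostDisjoint

open Function

theorem Cardinal.IsRegular.isRegularCardinalOrder_toType {κ : Cardinal} (h : κ.IsRegular) :
    IsRegularCardinalOrder κ.ord.ToType :=
  ⟨by rw [Ordinal.type_toType, Ordinal.cof_toType, h.cof_ord]⟩

section RegularCardinalOrder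

variable {K : Type u} [LinearOrder K] [WellFoundedLT K] [IsRegularCardinalOrder K]

theorem exists_forall_lt_of_mk_lt {s : Set K} (hs : #s < #K) : ∃ b, ∀ a ∈ s, a < b :=
  not_isCofinal_iff.1 fun hc => (cof_le hc).not_gt (by rwa [cof_eq_cardinalMk])

variable [Infinite K]

theorem exists_forall_almostDisjoint (g : K → K → K) :
    ∃ f : K → K, ∀ i, AlmostDisjoint f (g i) := by
  have hbound (ξ : K) : ∃ b, ∀ i ≤ ξ, g i ξ < b := by
    obtain ⟨b, hb⟩ := exists_forall_lt_of_mk_lt <| mk_image_le.trans_lt <|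
      mk_Iic_lt (α := K) ξ ord_cardinalMk (aleph0_le_mk K)
    exact ⟨b, fun i hi => hb _ (mem_image_of_mem (g · ξ) (show i ∈ Iic ξ from hi))⟩
  choose f hf using hbound
  refine ⟨f, fun i => (mk_le_mk_of_subset fun ξ (hξ : f ξ = g i ξ) => ?_).trans_lt
    (mk_Iio_lt i ord_cardinalMk)⟩
  exact not_le.1 fun hi => (hf ξ i hi).ne' hξ

theorem exists_forall_almostDisjoint_of_mk_le (M : Set (K → K)) (hM : #M ≤ #K) :
    ∃ f : K → K, ∀ g ∈ M, AlmostDisjoint f g := by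
  rcases M.eq_empty_or_nonempty with rfl | ⟨g₀, hg₀⟩
  · exact ⟨id, by simp⟩
  have : Nonempty M := ⟨⟨g₀, hg₀⟩⟩
  obtain ⟨e⟩ := (le_def M K).1 hM
  obtain ⟨f, hf⟩ := exists_forall_almostDisjoint fun k => ((invFun e k : M) : K → K)
  refine ⟨f, fun g hg => ?_⟩
  obtain ⟨k, hk⟩ := invFun_surjective e.injective ⟨g, hg⟩
  simpa [hk] using hf k

theorem exists_almostDisjoint_family :
    ∃ F : Set (K → K), F.Pairwise AlmostDisjoint ∧ #K < #F := by
  obtain ⟨M, hM⟩ := zorn_subset {F : Set (K → K) | F.Pairwise AlmostDisjoint}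
    fun c hc hchain => ⟨⋃₀ c, hchain.pairwise_sUnion.2 hc, fun _ => subset_sUnion_of_mem⟩
  refine ⟨M, hM.prop, not_le.1 fun hle => ?_⟩
  obtain ⟨f, hf⟩ := exists_forall_almostDisjoint_of_mk_le M hle
  have hfM : f ∉ M := fun h => AlmostDisjoint.not_self f (hf f h)
  exact hfM (hM.mem_of_prop_insert (hM.prop.insert fun g hg _ => ⟨hf g hg, (hf g hg).symm⟩))

end RegularCardinalOrder

theorem exists_separating_family_of_almostDisjoint {P K : Type u} {β : Type*} [DecidableEq β]
    (hK : (#K).IsRegular) (ι : P → K → β) (hι : Pairwise (AlmostDisjoint on ι)) :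
    ∃ f : K × β → P → Bool, ∀ A : Set P, #A < #K → ∀ y ∉ A,
      ∃ i, (∀ x ∈ A, f i x = false) ∧ f i y = true := by
  refine ⟨fun i x => decide (ι x i.1 = i.2), fun A hA y hy => ?_⟩
  have hsmall : #(⋃ a ∈ A, {ξ | ι a ξ = ι y ξ}) < #K :=
    (card_biUnion_lt_iff_forall_of_isRegular hK hA).2 fun a ha => hι (ne_of_mem_of_not_mem ha hy)
  obtain ⟨ξ, hξ⟩ : ∃ ξ, ξ ∉ ⋃ a ∈ A, {ξ | ι a ξ = ι y ξ} := by
    by_contra! h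
    rw [eq_univ_of_forall h, mk_univ] at hsmall
    exact hsmall.false
  refine ⟨(ξ, ι y ξ), fun x hx => ?_, by simp⟩
  simpa using fun h => hξ (mem_biUnion hx h)

theorem stmt9_general (κ : Cardinal.{u}) (hreg : κ.IsRegular) (hunc : ℵ₀ < κ)
    {P : Type u} (hP : #P = Order.succ κ) :
    ∃ f : κ.out → P → Bool,
      ∀ A : Set P, A.Countable → ∀ y : P, y ∉ A →
        ∃ α : κ.out, (∀ x ∈ A, f α x = false) ∧ f α y = true := by
  let K := κ.ord.ToType
  have hK : #K = κ := mk_ord_toType κ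
  have := hreg.isRegularCardinalOrder_toType
  have : Infinite K := infinite_iff.2 (hK ▸ hreg.aleph0_le)
  obtain ⟨F, hF, hKF⟩ := exists_almostDisjoint_family (K := K)
  obtain ⟨ι⟩ := (le_def P F).1 (hP ▸ hK ▸ succ_le_of_lt hKF)
  obtain ⟨f, hf⟩ :=
    exists_separating_family_of_almostDisjoint (hK ▸ hreg) (fun x => (ι x : K → K))
      fun x y hxy => hF (ι x).2 (ι y).2 (Subtype.coe_ne_coe.2 (ι.injective.ne hxy))
  obtain ⟨e⟩ : Nonempty (κ.out ≃ K × K) := Cardinal.eq.1 (by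
    rw [mk_out, mk_prod, lift_id, hK, mul_eq_self hreg.aleph0_le])
  refine ⟨fun α => f (e α), fun A hA y hy => ?_⟩
  obtain ⟨i, hi⟩ := hf A ((mk_le_aleph0_iff.2 hA.to_subtype).trans_lt (hK ▸ hunc)) y hy
  exact ⟨e.symm i, by simpa using hi⟩

/-- Let κ be regular uncountable and P a locally countable partial order of
size κ⁺. Then there are κ many two-valued functions on P separating each
point from each countable set. -/
theorem stmt9 (κ : Cardinal.{u}) (hreg : κ.IsRegular) (hunc : ℵ₀ < κ)
    {P : Type u} [PartialOrder P] (hP : #P = Order.succ κ)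
    (hloc : ∀ x : P, {y : P | y ≤ x}.Countable) :
    ∃ f : κ.out → P → Bool,
      ∀ A : Set P, A.Countable → ∀ y : P, y ∉ A →
        ∃ α : κ.out, (∀ x ∈ A, f α x = false) ∧ f α y = true :=
  stmt9_general κ hreg hunc hP
end

section
/- Let κ be an uncountable regular cardinal. If there is a sequence (E_ξ : ξ < κ⁺) of subsets of κ such that for every countable B ⊆ κ⁺ and every ζ ∈ κ⁺ \ B there is a finite F ⊆ κ with E_ξ ∩ F ≠ E_ζ ∩ F for all ξ ∈ B, then there is a sequence (g_ξ : ξ < κ⁺) of functions g_ξ : κ → 2 such that for every countable B ⊆ κ⁺ and every ζ ∈ κ⁺ \ B, there exists α < κ with g_ξ(α) = 0 for all ξ ∈ B and g_ζ(α) = 1. -/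
open Cardinal

universe u

/-
Index the points of κ by pairs (F, A) of finite subsets of κ, which is possible since κ is
infinite, and let g_ξ be 1 at (F, A) exactly when E_ξ ∩ F = A. Given B and ζ, the finite set F
from the hypothesis together with A = E_ζ ∩ F gives a point where g_ζ is 1 and every g_ξ with
ξ ∈ B is 0.
-/

theorem Cardinal.mk_finset_prod_finset_of_infinite (X : Type*) [Infinite X] :
    #(Finset X × Finset X) = #X := by
  rw [mk_prod, mk_finset_of_infinite, lift_id, mul_eq_self (aleph0_le_mk X)]

theorem exists_bool_family_detecting_finite_traces {ι X : Type*} [Infinite X]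
    (E : ι → Set X) :
    ∃ g : ι → X → Bool, ∀ F A : Finset X, ∃ α, ∀ ξ, g ξ α = true ↔ E ξ ∩ ↑F = ↑A := by
  classical
  obtain ⟨e⟩ := Cardinal.eq.mp (mk_finset_prod_finset_of_infinite X)
  refine ⟨fun ξ α => decide (E ξ ∩ ↑(e.symm α).1 = ↑(e.symm α).2),
    fun F A => ⟨e (F, A), ?_⟩⟩
  simp

theorem stmt10_general (κ : Cardinal.{u}) (hunc : ℵ₀ < κ)
    (E : (Order.succ κ).out → Set κ.out)
    (hE : ∀ B : Set ((Order.succ κ).out), B.Countable →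
      ∀ ζ ∉ B, ∃ F : Finset κ.out, ∀ ξ ∈ B, E ξ ∩ ↑F ≠ E ζ ∩ ↑F) :
    ∃ g : (Order.succ κ).out → κ.out → Bool,
      ∀ B : Set ((Order.succ κ).out), B.Countable →
        ∀ ζ ∉ B, ∃ α : κ.out, (∀ ξ ∈ B, g ξ α = false) ∧ g ζ α = true := by
  classical
  have : Infinite κ.out := infinite_iff.mpr (by rw [mk_out]; exact hunc.le)
  obtain ⟨g, hg⟩ := exists_bool_family_detecting_finite_traces E
  refine ⟨g, fun B hB ζ hζ => ?_⟩
  obtain ⟨F, hF⟩ := hE B hB ζ hζ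
  have htrace : E ζ ∩ ↑F = ↑(F.filter (· ∈ E ζ)) := by
    ext x
    simp [and_comm]
  obtain ⟨α, hα⟩ := hg F (F.filter (· ∈ E ζ))
  refine ⟨α, fun ξ hξ => ?_, (hα ζ).mpr htrace⟩
  rw [← Bool.not_eq_true, hα ξ, ← htrace]
  exact hF ξ hξ

/-- From a family of κ⁺ subsets of κ separated on finite sets from countable
subfamilies, one obtains functions g_ξ : κ → 2 separating each index from each
countable set of indices. -/
theorem stmt10 (κ : Cardinal.{u}) (hreg : κ.IsRegular) (hunc : ℵ₀ < κ)
    (E : (Order.succ κ).out → Set κ.out)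
    (hE : ∀ B : Set ((Order.succ κ).out), B.Countable →
      ∀ ζ ∉ B, ∃ F : Finset κ.out, ∀ ξ ∈ B, E ξ ∩ ↑F ≠ E ζ ∩ ↑F) :
    ∃ g : (Order.succ κ).out → κ.out → Bool,
      ∀ B : Set ((Order.succ κ).out), B.Countable →
        ∀ ζ ∉ B, ∃ α : κ.out, (∀ ξ ∈ B, g ξ α = false) ∧ g ζ α = true :=
  stmt10_general κ hunc E hE
end

section
/- Let (P, ≤) be a locally countable partial order and f : P → 2 a function. Define y <' x iff there exists u ≤ x with f(u) = 1 and f(z) = 0 for all z ≤ y. Then the transitive closure of (< ∪ <') is irreflexive, and hence there is a linearization ≤_f of ≤ such that whenever f(u) = 1 for some u ≤ x and f(z) = 0 for all z ≤ y, we have y <_f x. -/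
/-! Call `x` *hit* if some `u ≤ x` has `f u = true`; the hit elements form an upper set. The
relation `y < x ∨ (y not hit ∧ x hit)` is then already a strict order (transitivity only needs
hit elements to be closed upwards), so its transitive closure is itself and is irreflexive.
Any linear extension of its reflexive closure is the required linearization. -/

universe u

theorem exists_isLinearOrder_of_isStrictOrder {α : Type*} (r : α → α → Prop) [IsStrictOrder α r] :
    ∃ s : α → α → Prop, IsLinearOrder α s ∧ ∀ a b, r a b → s a b := by
  let := partialOrderOfSO r
  obtain ⟨s, hs, hle⟩ := extend_partialOrder (α := α) (· ≤ ·)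
  exact ⟨s, hs, fun a b hab => hle a b (Or.inr hab)⟩

section HitRel

variable {P : Type*} [PartialOrder P] (f : P → Bool)

def IsHit (x : P) : Prop := ∃ u, u ≤ x ∧ f u = true

variable {f}

theorem IsHit.mono {x y : P} (hx : IsHit f x) (hxy : x ≤ y) : IsHit f y :=
  let ⟨u, hu, hfu⟩ := hx
  ⟨u, hu.trans hxy, hfu⟩

theorem not_isHit_iff {y : P} : ¬ IsHit f y ↔ ∀ z, z ≤ y → f z = false := by
  simp [IsHit]

variable (f)

def hitRel (y x : P) : Prop := y < x ∨ (IsHit f x ∧ ¬ IsHit f y)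

instance : IsStrictOrder P (hitRel f) where
  irrefl x := by rintro (h | ⟨hx, hx'⟩) <;> [exact lt_irrefl x h; exact hx' hx]
  trans a b c := by
    rintro (hab | ⟨hb, ha⟩) (hbc | ⟨hc, hb'⟩)
    · exact Or.inl (hab.trans hbc)
    · exact Or.inr ⟨hc, fun ha => hb' (ha.mono hab.le)⟩
    · exact Or.inr ⟨hb.mono hbc.le, ha⟩
    · exact absurd hb hb'

end HitRel

theorem stmt13_general {P : Type u} [PartialOrder P]
    (f : P → Bool) :
    (∀ x : P, ¬ Relation.TransGen
        (fun y x : P => y < x ∨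
          ((∃ u, u ≤ x ∧ f u = true) ∧ ∀ z, z ≤ y → f z = false)) x x) ∧
    ∃ s : P → P → Prop, IsLinearOrder P s ∧ (∀ a b : P, a ≤ b → s a b) ∧
      ∀ x y : P, (∃ u, u ≤ x ∧ f u = true) → (∀ z, z ≤ y → f z = false) →
        s y x ∧ y ≠ x := by
  have hrel : (fun y x : P => y < x ∨
      ((∃ u, u ≤ x ∧ f u = true) ∧ ∀ z, z ≤ y → f z = false)) = hitRel f := by
    funext y x
    rw [← not_isHit_iff]
    rfl
  obtain ⟨s, hs, hsub⟩ := exists_isLinearOrder_of_isStrictOrder (hitRel f)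
  have := hs
  refine ⟨fun x => ?_, s, hs, fun a b hab => ?_, fun x y hx hy => ⟨?_, ?_⟩⟩
  · rw [hrel, Relation.transGen_eq_self]
    exact irrefl x
  · rcases hab.lt_or_eq with h | rfl
    · exact hsub a b (Or.inl h)
    · exact refl a
  · exact hsub y x (Or.inr ⟨hx, not_isHit_iff.2 hy⟩)
  · rintro rfl
    exact not_isHit_iff.2 hy hx

/-- Given f : P → 2 on a locally countable partial order, define y <′ x iff
some u ≤ x has f u = 1 while f z = 0 for all z ≤ y. Then the transitive
closure of < ∪ <′ is irreflexive, and there is a linearization of ≤ such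
that y <′ x implies y is strictly below x. -/
theorem stmt13 {P : Type u} [PartialOrder P]
    (hloc : ∀ x : P, {y : P | y ≤ x}.Countable) (f : P → Bool) :
    (∀ x : P, ¬ Relation.TransGen
        (fun y x : P => y < x ∨
          ((∃ u, u ≤ x ∧ f u = true) ∧ ∀ z, z ≤ y → f z = false)) x x) ∧
    ∃ s : P → P → Prop, IsLinearOrder P s ∧ (∀ a b : P, a ≤ b → s a b) ∧
      ∀ x y : P, (∃ u, u ≤ x ∧ f u = true) → (∀ z, z ≤ y → f z = false) →
        s y x ∧ y ≠ x :=
  stmt13_general f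
end

section
/- Let κ be a regular uncountable cardinal. Then every locally countable partial order of cardinality κ⁺ has order dimension at most κ. -/
/-!
Fix functions `G x : κ → κ` for `x < κ⁺`, any two of which agree at fewer than `κ` points; they
are built by recursion, choosing `G x ξ` outside the fewer than `κ` values `G y ξ` with `y < x`
already seen at stage `ξ`. By regularity, for a point `x` and a countable set `B ∌ x` some `ξ`
lies outside all agreement sets of `G x` with the `G b`, `b ∈ B`, so the `κ` sets
`{p | G p ξ = η}` separate points from countable sets. For `x ≰ y`, separating `x` from the
countable set `Iic y` yields an upper set containing `x` but not `y`; moving such an upper set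
on top of a fixed linear extension gives `κ` linear extensions realizing the order.
-/

open Cardinal

universe u

open Order Set Function

lemma isLinearOrder_comap_le {α β : Type*} [LinearOrder β] {f : α → β} (hf : Injective f) :
    IsLinearOrder α (fun x y => f x ≤ f y) :=
  letI := LinearOrder.lift' f hf
  inferInstanceAs (IsLinearOrder α (· ≤ ·))

theorem orderDim_le_of_separating_upperSets {P ι : Type u} [PartialOrder P] (U : ι → UpperSet P)
    (hU : ∀ x y : P, ¬x ≤ y → ∃ i, x ∈ U i ∧ y ∉ U i) :
    orderDim P ≤ #ι := by
  -- `f i` lists the complement of `U i` first, then `U i`, each along a fixed linear extension.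
  let f (i : ι) (x : P) : Prop ×ₗ LinearExtension P := toLex (x ∈ U i, toLinearExtension x)
  have f_mono (i : ι) : Monotone (f i) :=
    Prod.Lex.toLex_mono.comp (Monotone.prodMk (fun _ _ h hx => (U i).upper h hx)
      toLinearExtension.monotone)
  have f_inj (i : ι) : Injective (f i) := fun x y h => congrArg (fun p => (ofLex p).2) h
  refine csInf_le' ⟨ι, fun i x y => f i x ≤ f i y, rfl,
    fun i => isLinearOrder_comap_le (f_inj i), fun x y => ⟨fun h i => f_mono i h, fun h => ?_⟩⟩
  by_contra hxy
  obtain ⟨i, hx, hy⟩ := hU x y hxy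
  refine (h i).not_gt (Prod.Lex.toLex_lt_toLex.2 (Or.inl ?_))
  exact lt_of_le_not_ge (fun hy' => (hy hy').elim) (fun h' => hy (h' hx))

lemma mk_Iic_toType_ord_lt {c : Cardinal.{u}} (hc : ℵ₀ ≤ c) (ξ : c.ord.ToType) :
    #(Iic ξ) < c := by
  rw [← Iio_insert]
  exact mk_insert_le.trans_lt (add_lt_of_lt hc (by simpa using mk_Iio_lt ξ)
    (one_lt_aleph0.trans_le hc))

theorem exists_pairwise_mk_setOf_eq_lt {κ : Cardinal.{u}} (hκ : κ.IsRegular) :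
    ∃ G : (succ κ).ord.ToType → κ.ord.ToType → κ.ord.ToType,
      Pairwise fun x y => #{ξ | G x ξ = G y ξ} < κ := by
  have hIio {c : Cardinal.{u}} (ξ : c.ord.ToType) : #(Iio ξ) < c := by simpa using mk_Iio_lt ξ
  have J (x : (succ κ).ord.ToType) : Iio x ↪ κ.ord.ToType :=
    Classical.choice <| (le_def _ _).1 <| by simpa [← lt_succ_iff] using hIio x
  -- The values at stage `ξ` of the earlier functions `g y` that `G x` has to avoid.
  let seen (x : (succ κ).ord.ToType) (g : ∀ y < x, κ.ord.ToType → κ.ord.ToType)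
      (ξ : κ.ord.ToType) : Set κ.ord.ToType :=
    (fun y : Iio x => g y y.2 ξ) '' (J x ⁻¹' Iio ξ)
  have seen_small x g ξ : #(seen x g ξ) < #κ.ord.ToType := by
    simpa using mk_image_le.trans_lt <|
      (mk_preimage_of_injective _ _ (J x).injective).trans_lt (hIio ξ)
  let G := wellFounded_lt.fix fun x g ξ => (compl_nonempty_of_mk_lt_mk (seen_small x g ξ)).some
  have G_ne x y (hyx : y < x) ξ (hξ : J x ⟨y, hyx⟩ < ξ) : G x ξ ≠ G y ξ := by
    intro h
    have hG : G x = fun ξ => (compl_nonempty_of_mk_lt_mk (seen_small x (fun y _ => G y) ξ)).some :=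
      wellFounded_lt.fix_eq _ x
    refine (compl_nonempty_of_mk_lt_mk (seen_small x (fun y _ => G y) ξ)).some_mem ?_
    exact ⟨⟨y, hyx⟩, hξ, by rw [← congrFun hG ξ, h]⟩
  refine ⟨G, fun x y hxy => ?_⟩
  wlog hyx : y < x generalizing x y
  · simpa only [eq_comm] using this y x hxy.symm (hxy.lt_or_gt.resolve_right hyx)
  exact (mk_le_mk_of_subset fun ξ h => not_lt.1 fun hξ => G_ne x y hyx ξ hξ h).trans_lt
    (mk_Iic_toType_ord_lt hκ.aleph0_le _)

theorem exists_separating_family {κ : Cardinal.{u}} (hκ : κ.IsRegular) {X : Type u}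
    (hX : #X ≤ succ κ) :
    ∃ (ι : Type u) (S : ι → Set X), #ι ≤ κ ∧
      ∀ x (B : Set X), #B < κ → x ∉ B → ∃ i, x ∈ S i ∧ Disjoint (S i) B := by
  obtain ⟨G, hG⟩ := exists_pairwise_mk_setOf_eq_lt hκ
  obtain ⟨e⟩ : Nonempty (X ↪ (succ κ).ord.ToType) := (le_def _ _).1 (by simpa using hX)
  refine ⟨κ.ord.ToType × κ.ord.ToType, fun i => {p | G (e p) i.1 = i.2},
    by simp [mul_eq_self hκ.aleph0_le], fun x B hB hxB => ?_⟩
  have agree_small : #(⋃ b ∈ B, {ξ | G (e x) ξ = G (e b) ξ}) < #κ.ord.ToType := by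
    rw [mk_toType, card_ord, card_biUnion_lt_iff_forall_of_isRegular hκ hB]
    exact fun b hb => hG (e.injective.ne (ne_of_mem_of_not_mem hb hxB).symm)
  obtain ⟨ξ, hξ⟩ := compl_nonempty_of_mk_lt_mk agree_small
  exact ⟨(ξ, G (e x) ξ), rfl, disjoint_left.2 fun b hb hbB => hξ (mem_biUnion hbB hb.symm)⟩

/-- A locally countable partial order of size κ⁺, for κ regular uncountable,
has order dimension at most κ. -/
theorem stmt14 (κ : Cardinal.{u}) (hreg : κ.IsRegular) (hunc : ℵ₀ < κ)
    {P : Type u} [PartialOrder P] (hP : #P = Order.succ κ)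
    (hloc : ∀ x : P, {y : P | y ≤ x}.Countable) :
    orderDim P ≤ κ := by
  obtain ⟨ι, S, hι, hS⟩ := exists_separating_family hreg hP.le
  refine le_trans (orderDim_le_of_separating_upperSets (fun i => upperClosure (S i))
    fun x y hxy => ?_) hι
  obtain ⟨i, hxi, hdisj⟩ := hS x (Iic y) ((hloc y).le_aleph0.trans_lt hunc) hxy
  exact ⟨i, subset_upperClosure hxi, fun ⟨d, hd, hdy⟩ => hdisj.ne_of_mem hd hdy rfl⟩
end

section
/- Let P = {{α} : α < ω₁} ∪ {{γ : γ < β} \ {α} : α, β < ω₁}, a family of subsets of ω₁ ordered by strict inclusion. Then {{α} : α < ω₁} is a strongly independent antichain in (P, ⊊) of cardinality ℵ₁; consequently the order dimension of (P, ⊊) is at least ℵ₁. -/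
open Cardinal

universe u

/-- ω₁ as a linearly ordered type. -/
abbrev Om1 : Type 1 := {o : Ordinal.{0} // o < (Cardinal.aleph 1).ord}

/-- The family P = {{α} : α < ω₁} ∪ {Iio β \ {α} : α, β < ω₁}, ordered by
inclusion. -/
abbrev Pfam : Set (Set Om1) :=
  {A | ∃ α : Om1, A = {α}} ∪ {A | ∃ α β : Om1, A = Set.Iio β \ {α}}

/-!
If a realizer had fewer linear orders than a strongly independent set `S`, each `x ∈ S` could be
assigned an order `≤ᵢ` in which every other `x' ∈ S` has an upper bound strictly below `x`:
otherwise the witnesses `x'` for the failing orders would form a small subset of `S` all of whose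
upper bounds lie above `x` in every order, hence above `x`. Two distinct `x, x'` sharing an order
then give `x' ≤ᵢ y <ᵢ x ≤ᵢ y' <ᵢ x'`. In `Pfam` the singletons are strongly independent because
`ℵ₁` is regular: countably many singletons `{γ}` other than `{α}` lie below `Iio β \ {α}` for any
`β` above all the `γ`, and `{α}` does not.
-/

section StronglyIndependent

variable {P : Type u} [PartialOrder P]

def IsStronglyIndependent (S : Set P) : Prop :=
  ∀ T ⊆ S, #T < #S → ∀ x ∈ S \ T, ∃ y : P, (∀ t ∈ T, t ≤ y) ∧ ¬ x ≤ y

theorem exists_linearExtension_not_le {x y : P} (hxy : ¬ x ≤ y) :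
    ∃ s : P → P → Prop, IsLinearOrder P s ∧ (∀ a b : P, a ≤ b → s a b) ∧ ¬ s x y := by
  -- the least order containing `≤` and `y < x`
  let r : P → P → Prop := fun a b => a ≤ b ∨ (a ≤ y ∧ x ≤ b)
  have : IsPartialOrder P r :=
    { refl := fun a => Or.inl le_rfl
      trans := by
        rintro a b c (hab | ⟨hay, hxb⟩) (hbc | ⟨hby, hxc⟩)
        · exact Or.inl (hab.trans hbc)
        · exact Or.inr ⟨hab.trans hby, hxc⟩
        · exact Or.inr ⟨hay, hxb.trans hbc⟩
        · exact absurd (hxb.trans hby) hxy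
      antisymm := by
        rintro a b (hab | ⟨hay, hxb⟩) (hba | ⟨hby, hxa⟩)
        · exact le_antisymm hab hba
        · exact absurd (hxa.trans (hab.trans hby)) hxy
        · exact absurd (hxb.trans (hba.trans hay)) hxy
        · exact absurd (hxb.trans hby) hxy }
  obtain ⟨s, hs, hrs⟩ := extend_partialOrder r
  refine ⟨s, hs, fun a b hab => hrs a b (Or.inl hab), fun hsxy => hxy ?_⟩
  have hsyx : s y x := hrs y x (Or.inr ⟨le_rfl, le_rfl⟩)
  exact (antisymm hsxy hsyx : x = y).le

theorem isRealizer_linearExtensions :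
    IsRealizer P fun s : {s : P → P → Prop // IsLinearOrder P s ∧ ∀ a b : P, a ≤ b → s a b} =>
      s.1 := by
  refine ⟨fun s => s.2.1, fun x y => ⟨fun hxy s => s.2.2 x y hxy, fun h => ?_⟩⟩
  by_contra hxy
  obtain ⟨s, hs, hext, hsxy⟩ := exists_linearExtension_not_le hxy
  exact hsxy (h ⟨s, hs, hext⟩)

namespace IsRealizer

variable {ι : Type u} {L : ι → P → P → Prop}

theorem exists_forall_exists_not_le (hL : IsRealizer P L) {S : Set P}
    (hS : IsStronglyIndependent S) (hι : #ι < #S) {x : P} (hx : x ∈ S) :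
    ∃ i, ∀ x' ∈ S, x' ≠ x → ∃ y, x' ≤ y ∧ ¬ L i x y := by
  by_contra! h
  choose w hwS hwx hw using h
  have hT : #(Set.range w) < #S := mk_range_le.trans_lt hι
  have hxT : x ∉ Set.range w := fun ⟨i, hi⟩ => hwx i hi
  obtain ⟨y, hTy, hxy⟩ :=
    hS (Set.range w) (Set.range_subset_iff.2 hwS) hT x ⟨hx, hxT⟩
  exact hxy ((hL.2 x y).2 fun i => hw i y (hTy _ ⟨i, rfl⟩))

theorem mk_le_of_isStronglyIndependent (hL : IsRealizer P L) {S : Set P}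
    (hS : IsStronglyIndependent S) : #S ≤ #ι := by
  by_contra! hι
  choose g hg using fun x : S => hL.exists_forall_exists_not_le hS hι x.2
  obtain ⟨⟨x, hx⟩, ⟨x', hx'⟩, hgx, hne⟩ := Function.not_injective_iff.1
    fun hinj : Function.Injective g => (mk_le_of_injective hinj).not_gt hι
  replace hne : x' ≠ x := fun h => hne (Subtype.ext h.symm)
  set i := g ⟨x, hx⟩
  have := hL.1 i
  obtain ⟨y, hx'y, hxy⟩ := hg ⟨x, hx⟩ x' hx' hne
  obtain ⟨y', hxy', hx'y'⟩ := hg ⟨x', hx'⟩ x hx hne.symm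
  rw [← hgx] at hx'y'
  have hyx : L i y x := (total_of (L i) x y).resolve_left hxy
  have hy'x' : L i y' x' := (total_of (L i) x' y').resolve_left hx'y'
  have hxx' : L i x x' := _root_.trans ((hL.2 x y').1 hxy' i) hy'x'
  have hx'x : L i x' x := _root_.trans ((hL.2 x' y).1 hx'y i) hyx
  exact hne (antisymm hx'x hxx')

end IsRealizer

theorem IsStronglyIndependent.mk_le_orderDim {S : Set P} (hS : IsStronglyIndependent S) :
    #S ≤ orderDim P :=
  le_csInf ⟨_, _, _, rfl, isRealizer_linearExtensions⟩ fun _ ⟨_, _, hc, hL⟩ =>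
    hc ▸ hL.mk_le_of_isStronglyIndependent hS

end StronglyIndependent

namespace Om1

theorem mk_eq : #Om1 = aleph 1 := by
  have h := Cardinal.mk_Iio_ordinal (aleph 1).ord
  rwa [card_ord, lift_aleph, Ordinal.lift_one] at h

theorem exists_forall_lt_of_mk_lt {ι : Type 1} (f : ι → Om1) (hι : #ι < aleph 1) :
    ∃ β : Om1, ∀ i, f i < β := by
  have hcof : Cardinal.lift.{0} #ι < (Ordinal.lift.{1} (aleph.{0} 1).ord).cof := by
    rwa [lift_ord, lift_aleph, Ordinal.lift_one, isRegular_aleph_one.cof_ord, lift_uzero]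
  have hsup := Ordinal.lift_iSup_add_one_lt_of_lt_cof.{0, 1} hcof fun i => (f i).2
  have hbdd : BddAbove (Set.range fun i => (f i).1 + 1) :=
    ⟨_, Set.forall_mem_range.2 fun i => Order.add_one_le_of_lt (f i).2⟩
  exact ⟨⟨_, hsup⟩, fun i =>
    Subtype.coe_lt_coe.1 ((Order.lt_add_one_iff.2 le_rfl).trans_le (le_ciSup hbdd i))⟩

end Om1

namespace Pfam

def single (α : Om1) : ↥Pfam := ⟨{α}, Or.inl ⟨α, rfl⟩⟩

def puncturedIio (α β : Om1) : ↥Pfam := ⟨Set.Iio β \ {α}, Or.inr ⟨α, β, rfl⟩⟩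

def singletons : Set ↥Pfam := {x | ∃ α : Om1, (x : Set Om1) = {α}}

theorem single_injective : Function.Injective single := fun _ _ h =>
  Set.singleton_injective (congrArg Subtype.val h)

theorem range_single : Set.range single = singletons :=
  Set.ext fun _ => ⟨fun ⟨α, hα⟩ => ⟨α, hα ▸ rfl⟩, fun ⟨α, hα⟩ => ⟨α, Subtype.ext hα.symm⟩⟩

theorem mk_singletons : #singletons = aleph 1 := by
  rw [← range_single, mk_range_eq _ single_injective, Om1.mk_eq]

theorem isAntichain_singletons : IsAntichain (· ≤ ·) singletons := by
  rintro x ⟨α, hα⟩ y ⟨β, hβ⟩ hne hle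
  have hsub : (x : Set Om1) ⊆ y := hle
  rw [hα, hβ, Set.singleton_subset_singleton] at hsub
  exact hne (Subtype.ext (by rw [hα, hβ, hsub]))

theorem single_le_puncturedIio_iff {γ α β : Om1} :
    single γ ≤ puncturedIio α β ↔ γ < β ∧ γ ≠ α :=
  Set.singleton_subset_iff

theorem isStronglyIndependent_singletons : IsStronglyIndependent singletons := by
  rintro T hT hTcard x ⟨hx, hxT⟩
  rw [← range_single] at hT hx
  obtain ⟨α, rfl⟩ := hx
  choose g hg using fun t : T => hT t.2
  obtain ⟨β, hβ⟩ := Om1.exists_forall_lt_of_mk_lt g (mk_singletons ▸ hTcard)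
  refine ⟨puncturedIio α β, fun t ht => ?_, fun h => (single_le_puncturedIio_iff.1 h).2 rfl⟩
  have ht' : single (g ⟨t, ht⟩) = t := hg ⟨t, ht⟩
  rw [← ht', single_le_puncturedIio_iff]
  refine ⟨hβ _, fun hα => hxT ?_⟩
  rwa [← hα, ht']

end Pfam

/-- The singletons form a strongly independent antichain of size ℵ₁ in Pfam,
and hence the order dimension of Pfam (under inclusion) is at least ℵ₁. -/
theorem stmt17 :
    (IsAntichain (· ≤ ·) {x : ↥Pfam | ∃ α : Om1, (x : Set Om1) = {α}}) ∧
    #(↥{x : ↥Pfam | ∃ α : Om1, (x : Set Om1) = {α}}) = Cardinal.aleph 1 ∧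
    (∀ T ⊆ {x : ↥Pfam | ∃ α : Om1, (x : Set Om1) = {α}},
      #(↥T) < Cardinal.aleph 1 →
      ∀ x ∈ {x : ↥Pfam | ∃ α : Om1, (x : Set Om1) = {α}} \ T,
        ∃ y : ↥Pfam, (∀ t ∈ T, t ≤ y) ∧ ¬ x ≤ y) ∧
    Cardinal.aleph 1 ≤ orderDim ↥Pfam := by
  have hS := Pfam.isStronglyIndependent_singletons
  refine ⟨Pfam.isAntichain_singletons, Pfam.mk_singletons, ?_,
    Pfam.mk_singletons ▸ hS.mk_le_orderDim⟩
  rwa [IsStronglyIndependent, Pfam.mk_singletons] at hS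
end

section
/- Let (P, ≤) be a partial order. The order dimension of the poset of initial segments (downward-closed subsets) of P ordered by inclusion equals the chain covering number of P, i.e., the least cardinality of a set 𝒞 of chains of P with ⋃𝒞 = P (for P infinite or of chain covering number at least 2). -/
open Cardinal

universe u

/-- The chain covering number: the least cardinality of a family of chains
covering P. -/
noncomputable def chainCoverNum (P : Type u) [PartialOrder P] : Cardinal.{u} :=
  sInf { c | ∃ 𝒞 : Set (Set P), #(↥𝒞) = c ∧ (∀ C ∈ 𝒞, IsChain (· ≤ ·) C) ∧ ⋃₀ 𝒞 = Set.univ }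

/-!
Given a chain cover `𝒞` of `P`, each chain `C ∈ 𝒞` orders the initial segments linearly
by `I ↦ I ∩ C` (two initial segments meet a chain in comparable sets); breaking ties with one
fixed linear extension of inclusion gives one linear order per chain, and these realize
inclusion because `𝒞` covers `P`. Conversely, given a realizer `(L i)`, let `C i` be the set of
`p` whose principal segment `↓p` lies `L i`-above `P ∖ ↑p`. Every `p` is in some `C i`, as
`↓p ⊄ P ∖ ↑p`; and if `p, q ∈ C i` were incomparable then `↓p ⊆ P ∖ ↑q` and `↓q ⊆ P ∖ ↑p`
would close an `L i`-cycle forcing `↓p = P ∖ ↑p`.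
-/

section Realizer

variable {Q : Type u} [PartialOrder Q] {ι : Type u} {L : ι → Q → Q → Prop}

lemma IsRealizer.exists_rel_of_not_le (hL : IsRealizer Q L) {x y : Q} (h : ¬ x ≤ y) :
    ∃ i, L i y x := by
  obtain ⟨i, hi⟩ : ∃ i, ¬ L i x y := by simpa [hL.2] using h
  have := hL.1 i
  exact ⟨i, (total_of (L i) x y).resolve_left hi⟩

lemma orderDim_le_of_isRealizer (hL : IsRealizer Q L) : orderDim Q ≤ #ι := by
  unfold orderDim
  exact csInf_le' <| Set.mem_ofPred.2 ⟨ι, L, rfl, hL⟩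

lemma exists_isRealizer_card_eq_orderDim (hL : IsRealizer Q L) :
    ∃ (κ : Type u) (L' : κ → Q → Q → Prop), #κ = orderDim Q ∧ IsRealizer Q L' := by
  obtain ⟨κ, L', hκ, hL'⟩ : orderDim Q ∈ _ := csInf_mem ⟨_, ι, L, rfl, hL⟩
  exact ⟨κ, L', hκ, hL'⟩

end Realizer

lemma isLinearOrder_lex_of_total {Q β : Type*} [PartialOrder β] (f : Q → β)
    (hf : ∀ a b, f a ≤ f b ∨ f b ≤ f a) (T : Q → Q → Prop) [IsLinearOrder Q T] :
    IsLinearOrder Q fun a b => f a < f b ∨ f a = f b ∧ T a b where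
  refl a := .inr ⟨rfl, refl_of T a⟩
  trans a b c := by
    rintro (hab | ⟨hab, Tab⟩) (hbc | ⟨hbc, Tbc⟩)
    · exact .inl (hab.trans hbc)
    · exact .inl (hbc ▸ hab)
    · exact .inl (hab ▸ hbc)
    · exact .inr ⟨hab.trans hbc, trans_of T Tab Tbc⟩
  antisymm a b := by
    rintro (hab | ⟨hab, Tab⟩) (hba | ⟨hba, Tba⟩)
    · exact absurd hba hab.not_gt
    · exact absurd hab (hba ▸ lt_irrefl _)
    · exact absurd hba (hab ▸ lt_irrefl _)
    · exact antisymm_of T Tab Tba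
  total a b := by
    rcases eq_or_ne (f a) (f b) with hab | hab
    · exact (total_of T a b).imp (.inr ⟨hab, ·⟩) (.inr ⟨hab.symm, ·⟩)
    · exact (hf a b).imp (.inl <| lt_of_le_of_ne · hab) (.inl <| lt_of_le_of_ne · hab.symm)

section ChainCover

variable {P : Type u} [PartialOrder P]

lemma chainCoverNum_le {ι : Type u} {C : ι → Set P} (hC : ∀ i, IsChain (· ≤ ·) (C i))
    (hcov : ∀ p, ∃ i, p ∈ C i) : chainCoverNum P ≤ #ι := by
  unfold chainCoverNum
  refine (csInf_le' <| Set.mem_ofPred.2 ⟨Set.range C, rfl, Set.forall_mem_range.2 hC, ?_⟩).trans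
    mk_range_le
  simpa [Set.sUnion_range, Set.eq_univ_iff_forall] using hcov

variable (P) in
lemma exists_chain_cover_card_eq_chainCoverNum :
    ∃ (ι : Type u) (C : ι → Set P), #ι = chainCoverNum P ∧
      (∀ i, IsChain (· ≤ ·) (C i)) ∧ ∀ p, ∃ i, p ∈ C i := by
  obtain ⟨𝒞, hcard, hchain, hcov⟩ : chainCoverNum P ∈ _ := csInf_mem
    ⟨_, Set.range ({·}), rfl, Set.forall_mem_range.2 fun _ => Set.subsingleton_singleton.isChain,
      by simp [Set.sUnion_range, Set.eq_univ_iff_forall]⟩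
  exact ⟨𝒞, (↑), hcard, fun C => hchain C C.2, fun p => by
    simpa using Set.eq_univ_iff_forall.1 hcov p⟩

abbrev InitialSegment (P : Type u) [PartialOrder P] : Type u :=
  {I : Set P // ∀ ⦃x y : P⦄, x ≤ y → y ∈ I → x ∈ I}

namespace InitialSegment

def Iic (p : P) : InitialSegment P := ⟨{x | x ≤ p}, fun _ _ hxy hy => hxy.trans hy⟩

def complIci (p : P) : InitialSegment P :=
  ⟨{x | ¬ p ≤ x}, fun _ _ hxy hy hpx => hy (hpx.trans hxy)⟩

lemma Iic_le_complIci_iff {p q : P} : Iic p ≤ complIci q ↔ ¬ q ≤ p :=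
  ⟨fun h => h le_rfl, fun h _ hxp hqx => h (hqx.trans hxp)⟩

lemma inter_subset_total (I J : InitialSegment P) {C : Set P} (hC : IsChain (· ≤ ·) C) :
    I.1 ∩ C ⊆ J.1 ∩ C ∨ J.1 ∩ C ⊆ I.1 ∩ C := by
  by_contra! h
  obtain ⟨a, ⟨haI, haC⟩, haJ⟩ := Set.not_subset.1 h.1
  obtain ⟨b, ⟨hbJ, hbC⟩, hbI⟩ := Set.not_subset.1 h.2
  have hab : a ≠ b := by rintro rfl; exact haJ ⟨hbJ, haC⟩
  rcases hC haC hbC hab with hle | hba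
  · exact haJ ⟨J.2 hle hbJ, haC⟩
  · exact hbI ⟨I.2 hba haI, hbC⟩

lemma chainCoverNum_le_of_isRealizer {ι : Type u}
    {L : ι → InitialSegment P → InitialSegment P → Prop} (hL : IsRealizer _ L) :
    chainCoverNum P ≤ #ι := by
  refine chainCoverNum_le (C := fun i => {p | L i (complIci p) (Iic p)}) (fun i p hp q hq _ => ?_)
    fun p => hL.exists_rel_of_not_le (Iic_le_complIci_iff.not.2 (not_not.2 le_rfl))
  have := hL.1 i
  by_contra! hpq
  have hpq' : L i (Iic p) (complIci q) := (hL.2 _ _).1 (Iic_le_complIci_iff.2 hpq.2) i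
  have hqp' : L i (Iic q) (complIci p) := (hL.2 _ _).1 (Iic_le_complIci_iff.2 hpq.1) i
  have hcycle : L i (Iic p) (complIci p) := trans_of (L i) hpq' (trans_of (L i) hq hqp')
  have heq : Iic p = complIci p := antisymm_of (L i) hcycle hp
  exact Iic_le_complIci_iff.1 heq.le le_rfl

lemma exists_isRealizer_of_chain_cover {ι : Type u} {C : ι → Set P}
    (hC : ∀ i, IsChain (· ≤ ·) (C i)) (hcov : ∀ p, ∃ i, p ∈ C i) :
    ∃ L : ι → InitialSegment P → InitialSegment P → Prop, IsRealizer _ L := by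
  obtain ⟨T, hT, hleT⟩ := extend_partialOrder ((· ≤ ·) : InitialSegment P → _ → Prop)
  refine ⟨fun i I J => I.1 ∩ C i < J.1 ∩ C i ∨ I.1 ∩ C i = J.1 ∩ C i ∧ T I J,
    fun i => isLinearOrder_lex_of_total _ (fun I J => inter_subset_total I J (hC i)) T,
    fun I J => ⟨fun hIJ i => ?_, fun h x hx => ?_⟩⟩
  · exact (Set.inter_subset_inter_left _ hIJ).lt_or_eq.imp id (⟨·, hleT _ _ hIJ⟩)
  · obtain ⟨i, hi⟩ := hcov x
    exact ((h i).elim le_of_lt (·.1.le) ⟨hx, hi⟩).1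

end InitialSegment

end ChainCover

theorem stmt18_general {P : Type u} [PartialOrder P] :
    orderDim {I : Set P // ∀ ⦃x y : P⦄, x ≤ y → y ∈ I → x ∈ I} =
      chainCoverNum P := by
  obtain ⟨ι, C, hι, hC, hcov⟩ := exists_chain_cover_card_eq_chainCoverNum P
  obtain ⟨L, hL⟩ := InitialSegment.exists_isRealizer_of_chain_cover hC hcov
  obtain ⟨κ, L', hκ, hL'⟩ := exists_isRealizer_card_eq_orderDim hL
  exact le_antisymm (hι ▸ orderDim_le_of_isRealizer hL)
    (hκ ▸ InitialSegment.chainCoverNum_le_of_isRealizer hL')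

/-- Pouzet's theorem: the order dimension of the poset of initial segments of
P, ordered by inclusion, equals the chain covering number of P (assuming P is
infinite or has chain covering number at least 2). -/
theorem stmt18 {P : Type u} [PartialOrder P]
    (hside : Infinite P ∨ 2 ≤ chainCoverNum P) :
    orderDim {I : Set P // ∀ ⦃x y : P⦄, x ≤ y → y ∈ I → x ∈ I} =
      chainCoverNum P :=
  stmt18_general
end
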